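/- Modulo IPC-provable equivalence, the set NNIL of formulas (over a fixed finite set of atoms) is finite. -/

import Mathlib

inductive Fm : Type
  | bot : Fm
  | atom : ℕ → Fm
  | and : Fm → Fm → Fm
  | or : Fm → Fm → Fm
  | imp : Fm → Fm → Fm
deriving DecidableEq

namespace Fm

def neg (A : Fm) : Fm := A.imp .bot
def top : Fm := Fm.bot.imp .bot
def iff (A B : Fm) : Fm := (A.imp B).and (B.imp A)

def subst (θ : ℕ → Fm) : Fm → Fm
  | bot => bot
  | atom n => θ n
  | and A B => (A.subst θ).and (B.subst θ)
  | or A B => (A.subst θ).or (B.subst θ)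
  | imp A B => (A.subst θ).imp (B.subst θ)

def atoms : Fm → Finset ℕ
  | bot => ∅
  | atom n => {n}
  | and A B => A.atoms ∪ B.atoms
  | or A B => A.atoms ∪ B.atoms
  | imp A B => A.atoms ∪ B.atoms

/-- maximal nesting of implications in the left/overall: `c→`. -/
def cimp : Fm → ℕ
  | bot => 0
  | atom _ => 0
  | and A B => max A.cimp B.cimp
  | or A B => max A.cimp B.cimp
  | imp A B => 1 + max A.cimp B.cimp

end Fm

def bigAndL (l : List Fm) : Fm := l.foldr Fm.and Fm.top
def bigOrL (l : List Fm) : Fm := l.foldr Fm.or Fm.bot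

/-- nonempty disjunction -/
def bigOrNE : Fm → List Fm → Fm
  | A, [] => A
  | A, B :: l => A.or (bigOrNE B l)

/-- Hilbert-style intuitionistic propositional calculus. -/
inductive IPC : Fm → Prop
  | imp_k (A B : Fm) : IPC (A.imp (B.imp A))
  | imp_s (A B C : Fm) : IPC ((A.imp (B.imp C)).imp ((A.imp B).imp (A.imp C)))
  | and_intro (A B : Fm) : IPC (A.imp (B.imp (A.and B)))
  | and_left (A B : Fm) : IPC ((A.and B).imp A)
  | and_right (A B : Fm) : IPC ((A.and B).imp B)
  | or_inl (A B : Fm) : IPC (A.imp (A.or B))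
  | or_inr (A B : Fm) : IPC (B.imp (A.or B))
  | or_elim (A B C : Fm) : IPC ((A.imp C).imp ((B.imp C).imp ((A.or B).imp C)))
  | exfalso (A : Fm) : IPC (Fm.bot.imp A)
  | mp {A B : Fm} : IPC (A.imp B) → IPC A → IPC B

/-- Γ-preservativity in the logic T : `A ⊳_{T,Γ} B`. -/
def Pres (T : Fm → Prop) (Γ : Set Fm) (A B : Fm) : Prop :=
  ∀ E ∈ Γ, T (E.imp A) → T (E.imp B)

/-- substitutions are identity on the parameters. -/
def IdOnPar (par : Finset ℕ) (θ : ℕ → Fm) : Prop :=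
  ∀ p ∈ par, θ p = Fm.atom p

/-- implication-free formulas. -/
inductive NI : Fm → Prop
  | bot : NI .bot
  | atom (n : ℕ) : NI (.atom n)
  | and {A B : Fm} : NI A → NI B → NI (A.and B)
  | or {A B : Fm} : NI A → NI B → NI (A.or B)

/-- No Nested Implications in the Left. -/
inductive NNIL : Fm → Prop
  | bot : NNIL .bot
  | atom (n : ℕ) : NNIL (.atom n)
  | and {A B : Fm} : NNIL A → NNIL B → NNIL (A.and B)
  | or {A B : Fm} : NNIL A → NNIL B → NNIL (A.or B)
  | imp {A B : Fm} : NI A → NNIL B → NNIL (A.imp B)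

def IPCPrime (A : Fm) : Prop :=
  ∀ B C, IPC (A.imp (B.or C)) → IPC (A.imp B) ∨ IPC (A.imp C)

/-- T-components: `⋀Γ ∧ ⋀Δ`, Γ atoms, Δ implications with atomic
antecedents not T-provable from Γ. -/
def IsComponentOver (T : Fm → Prop) (B : Fm) : Prop :=
  ∃ (as : List ℕ) (imps : List (ℕ × Fm)),
    B = (bigAndL (as.map Fm.atom)).and
          (bigAndL (imps.map fun p => (Fm.atom p.1).imp p.2)) ∧
    ∀ p ∈ imps, ¬ T ((bigAndL (as.map Fm.atom)).imp (Fm.atom p.1))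

/-!
Every NNIL formula is IPC-equivalent to a disjunction of conjunctions of *units*: atoms, and
implications `⋀T → D` where `T` is a nonempty set of atoms and `D` is again such a normal form, built
from units over the remaining atoms. For `A → B` with `A` implication-free, write `A` as a
disjunction of conjunctions `⋀d` of atoms, so that `A → B` is `⋀_d (⋀d → B)`; under the
hypothesis `⋀d` the atoms of `d` are provable, so `B` can be normalised relative to them and they
disappear from it. Since each nesting removes atoms, the units over a finite set of atoms form a
finite set, and hence so do the normal forms.
-/

open scoped FinsetFamily

inductive Entails (Γ : Set Fm) : Fm → Prop
  | ax {A : Fm} : IPC A → Entails Γ A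
  | hyp {A : Fm} : A ∈ Γ → Entails Γ A
  | mp {A B : Fm} : Entails Γ (A.imp B) → Entails Γ A → Entails Γ B

namespace Entails

variable {Γ Δ : Set Fm} {A A' B B' C X : Fm}

theorem mono (hΓ : Γ ⊆ Δ) (h : Entails Γ A) : Entails Δ A := by
  induction h with
  | ax h => exact ax h
  | hyp h => exact hyp (hΓ h)
  | mp _ _ ih₁ ih₂ => exact ih₁.mp ih₂

theorem weaken (h : Entails Γ A) : Entails (insert B Γ) A :=
  h.mono (Set.subset_insert _ _)

theorem assumption : Entails (insert A Γ) A :=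
  hyp (Set.mem_insert _ _)

theorem toIPC (h : Entails ∅ A) : IPC A := by
  induction h with
  | ax h => exact h
  | hyp h => exact absurd h (Set.notMem_empty _)
  | mp _ _ ih₁ ih₂ => exact ih₁.mp ih₂

theorem imp_self : Entails Γ (A.imp A) :=
  ((ax (IPC.imp_s A (A.imp A) A)).mp (ax (IPC.imp_k A (A.imp A)))).mp (ax (IPC.imp_k A A))

theorem imp_intro (h : Entails (insert A Γ) B) : Entails Γ (A.imp B) := by
  induction h with
  | ax h => exact (ax (IPC.imp_k _ A)).mp (ax h)
  | hyp h =>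
    rcases h with rfl | h
    · exact imp_self
    · exact (ax (IPC.imp_k _ A)).mp (hyp h)
  | mp _ _ ih₁ ih₂ => exact ((ax (IPC.imp_s _ _ _)).mp ih₁).mp ih₂

theorem top : Entails Γ Fm.top := imp_self

theorem exfalso (h : Entails Γ .bot) : Entails Γ A := (ax (IPC.exfalso A)).mp h

theorem and_intro (h₁ : Entails Γ A) (h₂ : Entails Γ B) : Entails Γ (A.and B) :=
  ((ax (IPC.and_intro A B)).mp h₁).mp h₂

theorem and_left (h : Entails Γ (A.and B)) : Entails Γ A := (ax (IPC.and_left A B)).mp h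

theorem and_right (h : Entails Γ (A.and B)) : Entails Γ B := (ax (IPC.and_right A B)).mp h

theorem or_inl (h : Entails Γ A) : Entails Γ (A.or B) := (ax (IPC.or_inl A B)).mp h

theorem or_inr (h : Entails Γ B) : Entails Γ (A.or B) := (ax (IPC.or_inr A B)).mp h

theorem or_elim (h : Entails Γ (A.or B)) (h₁ : Entails (insert A Γ) C)
    (h₂ : Entails (insert B Γ) C) : Entails Γ C :=
  (((ax (IPC.or_elim A B C)).mp (imp_intro h₁)).mp (imp_intro h₂)).mp h

theorem iff_intro (h₁ : Entails (insert A Γ) B) (h₂ : Entails (insert B Γ) A) :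
    Entails Γ (A.iff B) :=
  (imp_intro h₁).and_intro (imp_intro h₂)

theorem iff_mp (h : Entails Γ (A.iff B)) (hA : Entails Γ A) : Entails Γ B := h.and_left.mp hA

theorem iff_mpr (h : Entails Γ (A.iff B)) (hB : Entails Γ B) : Entails Γ A := h.and_right.mp hB

theorem iff_refl : Entails Γ (A.iff A) := iff_intro assumption assumption

theorem iff_symm (h : Entails Γ (A.iff B)) : Entails Γ (B.iff A) := h.and_right.and_intro h.and_left

theorem iff_trans (h₁ : Entails Γ (A.iff B)) (h₂ : Entails Γ (B.iff C)) : Entails Γ (A.iff C) :=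
  iff_intro (h₂.weaken.iff_mp (h₁.weaken.iff_mp assumption))
    (h₁.weaken.iff_mpr (h₂.weaken.iff_mpr assumption))

theorem iff_top (h : Entails Γ A) : Entails Γ (A.iff Fm.top) := iff_intro top h.weaken

theorem and_congr (h₁ : Entails Γ (A.iff A')) (h₂ : Entails Γ (B.iff B')) :
    Entails Γ ((A.and B).iff (A'.and B')) :=
  iff_intro
    ((h₁.weaken.iff_mp assumption.and_left).and_intro (h₂.weaken.iff_mp assumption.and_right))
    ((h₁.weaken.iff_mpr assumption.and_left).and_intro (h₂.weaken.iff_mpr assumption.and_right))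

theorem or_congr (h₁ : Entails Γ (A.iff A')) (h₂ : Entails Γ (B.iff B')) :
    Entails Γ ((A.or B).iff (A'.or B')) :=
  iff_intro
    (assumption.or_elim (h₁.weaken.weaken.iff_mp assumption).or_inl
      (h₂.weaken.weaken.iff_mp assumption).or_inr)
    (assumption.or_elim (h₁.weaken.weaken.iff_mpr assumption).or_inl
      (h₂.weaken.weaken.iff_mpr assumption).or_inr)

theorem imp_congr_left (h : Entails Γ (A.iff A')) : Entails Γ ((A.imp B).iff (A'.imp B)) :=
  iff_intro (imp_intro (assumption.weaken.mp (h.weaken.weaken.iff_mpr assumption)))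
    (imp_intro (assumption.weaken.mp (h.weaken.weaken.iff_mp assumption)))

theorem imp_congr_right (h : Entails (insert X Γ) (B.iff B')) :
    Entails Γ ((X.imp B).iff (X.imp B')) := by
  have h' (E : Fm) : Entails (insert X (insert E Γ)) (B.iff B') :=
    h.mono (Set.insert_subset_insert (Set.subset_insert _ _))
  exact iff_intro (imp_intro ((h' _).iff_mp (assumption.weaken.mp assumption)))
    (imp_intro ((h' _).iff_mpr (assumption.weaken.mp assumption)))

theorem top_imp : Entails Γ ((Fm.top.imp A).iff A) :=
  iff_intro (assumption.mp top) (imp_intro assumption.weaken)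

theorem bigAndL_iff {l : List Fm} : Entails Γ (bigAndL l) ↔ ∀ a ∈ l, Entails Γ a := by
  induction l with
  | nil => exact ⟨fun _ _ h => absurd h List.not_mem_nil, fun _ => top⟩
  | cons a l ih =>
    rw [List.forall_mem_cons, ← ih]
    exact ⟨fun h => ⟨h.and_left, h.and_right⟩, fun h => h.1.and_intro h.2⟩

theorem bigOrL_intro {l : List Fm} (ha : A ∈ l) (h : Entails Γ A) : Entails Γ (bigOrL l) := by
  induction l with
  | nil => exact absurd ha List.not_mem_nil
  | cons b l ih =>
    rcases List.mem_cons.1 ha with rfl | ha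
    · exact h.or_inl
    · exact (ih ha).or_inr

theorem bigOrL_imp {l : List Fm} (h : ∀ a ∈ l, Entails Γ (a.imp C)) :
    Entails Γ ((bigOrL l).imp C) := by
  induction l with
  | nil => exact imp_intro (exfalso assumption)
  | cons a l ih =>
    rw [List.forall_mem_cons] at h
    exact ((ax (IPC.or_elim a _ C)).mp h.1).mp (ih h.2)

theorem bigOrL_elim {l : List Fm} (h : Entails Γ (bigOrL l))
    (hC : ∀ a ∈ l, Entails (insert a Γ) C) : Entails Γ C :=
  (bigOrL_imp fun a ha => imp_intro (hC a ha)).mp h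

end Entails

namespace Fm

variable {α : Type*} (f : α → Fm)

noncomputable def conj (c : Finset α) : Fm := bigAndL (c.toList.map f)

noncomputable def dnf (D : Finset (Finset α)) : Fm := bigOrL (D.toList.map (conj f))

@[simp]
theorem conj_empty : conj f ∅ = top := by
  simp [conj, bigAndL]

@[simp]
theorem dnf_empty : dnf f ∅ = .bot := by
  simp [dnf, bigOrL]

end Fm

namespace Entails

open Fm

variable {α : Type*} {f : α → Fm} {Γ : Set Fm} {A B : Fm} {c : Finset α} {D E : Finset (Finset α)}

theorem conj_iff : Entails Γ (conj f c) ↔ ∀ a ∈ c, Entails Γ (f a) := by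
  simp [conj, bigAndL_iff]

theorem dnf_intro (hc : c ∈ D) (h : Entails Γ (conj f c)) : Entails Γ (dnf f D) :=
  bigOrL_intro (List.mem_map.2 ⟨c, Finset.mem_toList.2 hc, rfl⟩) h

theorem dnf_elim (h : Entails Γ (dnf f D)) (hA : ∀ c ∈ D, Entails (insert (conj f c) Γ) A) :
    Entails Γ A :=
  bigOrL_elim h fun _ ha => by
    obtain ⟨c, hc, rfl⟩ := List.mem_map.1 ha
    exact hA c (Finset.mem_toList.1 hc)

theorem dnf_singleton_empty : Entails Γ (dnf f {∅}) :=
  dnf_intro (Finset.mem_singleton_self _) (conj_iff.2 fun _ h => absurd h (Finset.notMem_empty _))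

theorem dnf_singleton_singleton (a : α) : Entails Γ ((dnf f {{a}}).iff (f a)) :=
  iff_intro (dnf_elim assumption fun c hc => by
      rw [Finset.mem_singleton.1 hc]
      exact conj_iff.1 assumption a (Finset.mem_singleton_self a))
    (dnf_intro (Finset.mem_singleton_self _) (conj_iff.2 fun b hb => by
      rw [Finset.mem_singleton.1 hb]
      exact assumption))

theorem dnf_union [DecidableEq α] : Entails Γ ((dnf f (D ∪ E)).iff ((dnf f D).or (dnf f E))) :=
  iff_intro
    (dnf_elim assumption fun _ hc => (Finset.mem_union.1 hc).elim
      (fun hc => (dnf_intro hc assumption).or_inl) (fun hc => (dnf_intro hc assumption).or_inr))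
    (assumption.or_elim
      (dnf_elim assumption fun _ hc => dnf_intro (Finset.mem_union_left _ hc) assumption)
      (dnf_elim assumption fun _ hc => dnf_intro (Finset.mem_union_right _ hc) assumption))

theorem dnf_sups [DecidableEq α] : Entails Γ ((dnf f (D ⊻ E)).iff ((dnf f D).and (dnf f E))) := by
  refine iff_intro (dnf_elim assumption fun c hc => ?_) ?_
  · obtain ⟨c₁, hc₁, c₂, hc₂, rfl⟩ := Finset.mem_sups.1 hc
    exact (dnf_intro hc₁ (conj_iff.2 fun a ha =>
        conj_iff.1 assumption a (Finset.mem_union_left _ ha))).and_intro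
      (dnf_intro hc₂ (conj_iff.2 fun a ha => conj_iff.1 assumption a (Finset.mem_union_right _ ha)))
  · refine dnf_elim assumption.and_left fun c₁ hc₁ => ?_
    refine dnf_elim assumption.weaken.and_right fun c₂ hc₂ => ?_
    refine dnf_intro (Finset.mem_sups.2 ⟨c₁, hc₁, c₂, hc₂, rfl⟩) (conj_iff.2 fun a ha => ?_)
    rcases Finset.mem_union.1 ha with ha | ha
    · exact conj_iff.1 assumption.weaken a ha
    · exact conj_iff.1 assumption a ha

theorem dnf_imp :
    Entails Γ (((dnf f D).imp A).iff (bigAndL (D.toList.map fun c => (conj f c).imp A))) := by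
  refine iff_intro (bigAndL_iff.2 fun _ h => ?_) (imp_intro (dnf_elim assumption fun c hc => ?_))
  · obtain ⟨c, hc, rfl⟩ := List.mem_map.1 h
    exact imp_intro (assumption.weaken.mp (dnf_intro (Finset.mem_toList.1 hc) assumption))
  · exact (bigAndL_iff.1 assumption.weaken.weaken _
      (List.mem_map.2 ⟨c, Finset.mem_toList.2 hc, rfl⟩)).mp assumption

theorem conj_atom_sdiff {d T : Finset ℕ} (hT : ∀ n ∈ T, Entails Γ (.atom n)) :
    Entails Γ ((conj atom d).iff (conj atom (d \ T))) := by
  refine iff_intro (conj_iff.2 fun n hn => conj_iff.1 assumption n (Finset.sdiff_subset hn))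
    (conj_iff.2 fun n hn => ?_)
  by_cases hnT : n ∈ T
  · exact (hT n hnT).weaken
  · exact conj_iff.1 assumption n (Finset.mem_sdiff.2 ⟨hn, hnT⟩)

end Entails

open Fm Entails

/-- The atoms in `T` count as already proved: the equivalence is only required in contexts proving
them, which is what allows the normal form to avoid them. -/
def HasDNF (U : Finset Fm) (T : Finset ℕ) (A : Fm) : Prop :=
  ∃ D ⊆ U.powerset, ∀ Γ : Set Fm, (∀ n ∈ T, Entails Γ (atom n)) → Entails Γ (A.iff (dnf id D))

namespace HasDNF

variable {U : Finset Fm} {T : Finset ℕ} {A B : Fm}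

theorem of_iff (h : HasDNF U T B)
    (hAB : ∀ Γ : Set Fm, (∀ n ∈ T, Entails Γ (atom n)) → Entails Γ (A.iff B)) : HasDNF U T A :=
  let ⟨D, hD, hB⟩ := h
  ⟨D, hD, fun Γ hΓ => (hAB Γ hΓ).iff_trans (hB Γ hΓ)⟩

theorem bot : HasDNF U T .bot :=
  ⟨∅, Finset.empty_subset _, fun _ _ => by rw [dnf_empty]; exact iff_refl⟩

theorem top : HasDNF U T Fm.top :=
  ⟨{∅}, Finset.singleton_subset_iff.2 (Finset.empty_mem_powerset U),
    fun _ _ => (iff_top dnf_singleton_empty).iff_symm⟩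

theorem of_mem {u : Fm} (hu : u ∈ U) : HasDNF U T u :=
  ⟨{{u}}, by simpa using hu, fun _ _ => (dnf_singleton_singleton (f := id) u).iff_symm⟩

theorem and (hA : HasDNF U T A) (hB : HasDNF U T B) : HasDNF U T (A.and B) := by
  obtain ⟨D, hD, hA⟩ := hA
  obtain ⟨E, hE, hB⟩ := hB
  refine ⟨D ⊻ E, fun c hc => ?_,
    fun Γ hΓ => (and_congr (hA Γ hΓ) (hB Γ hΓ)).iff_trans dnf_sups.iff_symm⟩
  obtain ⟨c₁, hc₁, c₂, hc₂, rfl⟩ := Finset.mem_sups.1 hc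
  exact Finset.mem_powerset.2 (Finset.union_subset (Finset.mem_powerset.1 (hD hc₁))
    (Finset.mem_powerset.1 (hE hc₂)))

theorem or (hA : HasDNF U T A) (hB : HasDNF U T B) : HasDNF U T (A.or B) :=
  let ⟨D, hD, hA⟩ := hA
  let ⟨E, hE, hB⟩ := hB
  ⟨D ∪ E, Finset.union_subset hD hE,
    fun Γ hΓ => (or_congr (hA Γ hΓ) (hB Γ hΓ)).iff_trans dnf_union.iff_symm⟩

theorem bigAndL_map {β : Type*} {l : List β} {g : β → Fm} (h : ∀ x ∈ l, HasDNF U T (g x)) :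
    HasDNF U T (bigAndL (l.map g)) := by
  induction l with
  | nil => exact top
  | cons x l ih =>
    rw [List.forall_mem_cons] at h
    exact h.1.and (ih h.2)

end HasDNF

noncomputable def nnilUnits (S : Finset ℕ) : Finset Fm :=
  S.image atom ∪
    (S.powerset.erase ∅).attach.biUnion fun T =>
      (nnilUnits (S \ T.1)).powerset.powerset.image fun D => (conj atom T.1).imp (dnf id D)
termination_by S.card
decreasing_by
  obtain ⟨hT, hTS⟩ := Finset.mem_erase.1 T.2
  exact Finset.card_lt_card
    (Finset.sdiff_ssubset (Finset.mem_powerset.1 hTS) (Finset.nonempty_iff_ne_empty.2 hT))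

theorem atom_mem_nnilUnits {S : Finset ℕ} {n : ℕ} (hn : n ∈ S) : atom n ∈ nnilUnits S := by
  rw [nnilUnits]
  exact Finset.mem_union_left _ (Finset.mem_image_of_mem _ hn)

theorem conj_imp_dnf_mem_nnilUnits {S T : Finset ℕ} {D : Finset (Finset Fm)} (hTS : T ⊆ S)
    (hT : T.Nonempty) (hD : D ⊆ (nnilUnits (S \ T)).powerset) :
    (conj atom T).imp (dnf id D) ∈ nnilUnits S := by
  rw [nnilUnits]
  exact Finset.mem_union_right _ (Finset.mem_biUnion.2
    ⟨⟨T, Finset.mem_erase.2 ⟨hT.ne_empty, Finset.mem_powerset.2 hTS⟩⟩, Finset.mem_attach _ _,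
      Finset.mem_image.2 ⟨D, Finset.mem_powerset.2 hD, rfl⟩⟩)

theorem NI.exists_dnf {A : Fm} (hA : NI A) : ∃ F : Finset (Finset ℕ),
    (∀ d ∈ F, d ⊆ A.atoms) ∧ ∀ Γ : Set Fm, Entails Γ (A.iff (dnf Fm.atom F)) := by
  induction hA with
  | bot => exact ⟨∅, by simp, fun _ => by rw [dnf_empty]; exact iff_refl⟩
  | atom n => exact ⟨{{n}}, by simp [Fm.atoms], fun _ => (dnf_singleton_singleton n).iff_symm⟩
  | and _ _ ih₁ ih₂ =>
    obtain ⟨F₁, hF₁, h₁⟩ := ih₁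
    obtain ⟨F₂, hF₂, h₂⟩ := ih₂
    refine ⟨F₁ ⊻ F₂, fun d hd => ?_, fun Γ => ((h₁ Γ).and_congr (h₂ Γ)).iff_trans dnf_sups.iff_symm⟩
    obtain ⟨d₁, hd₁, d₂, hd₂, rfl⟩ := Finset.mem_sups.1 hd
    exact Finset.union_subset_union (hF₁ d₁ hd₁) (hF₂ d₂ hd₂)
  | or _ _ ih₁ ih₂ =>
    obtain ⟨F₁, hF₁, h₁⟩ := ih₁
    obtain ⟨F₂, hF₂, h₂⟩ := ih₂
    refine ⟨F₁ ∪ F₂, fun d hd => ?_, fun Γ => ((h₁ Γ).or_congr (h₂ Γ)).iff_trans dnf_union.iff_symm⟩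
    rcases Finset.mem_union.1 hd with hd | hd
    · exact (hF₁ d hd).trans Finset.subset_union_left
    · exact (hF₂ d hd).trans Finset.subset_union_right

theorem HasDNF.conj_atom_imp {S T d : Finset ℕ} {B : Fm} (hd : d ⊆ S)
    (hB : ∀ T, HasDNF (nnilUnits (S \ T)) T B) :
    HasDNF (nnilUnits (S \ T)) T ((conj atom d).imp B) := by
  have hdT (Γ : Set Fm) (hΓ : ∀ n ∈ T, Entails Γ (atom n)) :
      Entails Γ (((conj atom d).imp B).iff ((conj atom (d \ T)).imp B)) :=
    imp_congr_left (conj_atom_sdiff hΓ)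
  rcases (d \ T).eq_empty_or_nonempty with he | hne
  · refine (hB T).of_iff fun Γ hΓ => (hdT Γ hΓ).iff_trans ?_
    rw [he, conj_empty]
    exact top_imp
  · obtain ⟨D, hD, hBD⟩ := hB (T ∪ d \ T)
    have hmem : (conj atom (d \ T)).imp (dnf id D) ∈ nnilUnits (S \ T) :=
      conj_imp_dnf_mem_nnilUnits (Finset.sdiff_subset_sdiff hd subset_rfl) hne
        (by rwa [sdiff_sdiff_left])
    refine (of_mem hmem).of_iff fun Γ hΓ =>
      (hdT Γ hΓ).iff_trans (imp_congr_right (hBD _ fun n hn => ?_))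
    rcases Finset.mem_union.1 hn with hn | hn
    · exact (hΓ n hn).weaken
    · exact conj_iff.1 assumption n hn

theorem NNIL.hasDNF {S : Finset ℕ} {A : Fm} (hA : NNIL A) (hS : A.atoms ⊆ S) (T : Finset ℕ) :
    HasDNF (nnilUnits (S \ T)) T A := by
  induction hA generalizing T with
  | bot => exact .bot
  | atom n =>
    by_cases hn : n ∈ T
    · exact HasDNF.top.of_iff fun Γ hΓ => iff_top (hΓ n hn)
    · exact .of_mem (atom_mem_nnilUnits (Finset.mem_sdiff.2 ⟨hS (by simp [Fm.atoms]), hn⟩))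
  | and _ _ ih₁ ih₂ =>
    exact (ih₁ (Finset.subset_union_left.trans hS) T).and
      (ih₂ (Finset.subset_union_right.trans hS) T)
  | or _ _ ih₁ ih₂ =>
    exact (ih₁ (Finset.subset_union_left.trans hS) T).or
      (ih₂ (Finset.subset_union_right.trans hS) T)
  | imp hA _ ih =>
    obtain ⟨F, hF, hAF⟩ := hA.exists_dnf
    refine (HasDNF.bigAndL_map fun d hd => HasDNF.conj_atom_imp
        ((hF d (Finset.mem_toList.1 hd)).trans (Finset.subset_union_left.trans hS))
        (ih (Finset.subset_union_right.trans hS))).of_iff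
      fun Γ _ => (imp_congr_left (hAF Γ)).iff_trans dnf_imp

theorem stmt_8 (S : Finset ℕ) :
    ∃ L : Finset Fm, ∀ A : Fm, NNIL A → A.atoms ⊆ S →
      ∃ B ∈ L, IPC (A.iff B) := by
  refine ⟨(nnilUnits S).powerset.powerset.image (dnf id), fun A hA hS => ?_⟩
  obtain ⟨D, hD, hAD⟩ := hA.hasDNF hS ∅
  rw [Finset.sdiff_empty] at hD
  exact ⟨dnf id D, Finset.mem_image_of_mem _ (Finset.mem_powerset.2 hD),
    (hAD ∅ fun _ h => absurd h (Finset.notMem_empty _)).toIPC⟩
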